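/- The random variable I^{(g)} := ∑_{k=0}^∞ g(S_k) E_{k+1} is almost surely finite, for every real u > −λ/g(0) its Laplace transform E[e^{−u I^{(g)}}] is finite, and E[e^{−u I^{(g)}}] = lim_{K→∞} E[ ∏_{k=0}^K λ/(λ + g(S_k) u) ]; in particular I^{(g)} has finite moments of all orders. -/

import Mathlib

/-!
Conditionally on the jumps, `∑_{k<n} g(S_k) E_k` is a weighted sum of independent exponentials,
so Fubini against the product law of `(E_k)_{k<n}` gives
`E[exp(-u ∑_{k<n} g(S_k) E_k)] = E[∏_{k<n} λ/(λ + g(S_k) u)]` whenever `λ + g(0) u > 0`.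
Since `S_k ≥ δ k`, the weights have total mass `∑_k g(S_k) ≤ ∑_k g(δ k) =: B < ∞`, and
`λ/(λ - a x) ≤ exp (a x / (λ - a g(0)))` bounds these products by `exp (a B / (λ - a g(0)))`
for `u = -a < 0`. Monotone convergence turns this uniform bound into a.s. finiteness of `I^{(g)}`
and `E[exp(a I^{(g)})] < ∞` for `a < λ/g(0)`; this exponential moment dominates `exp(-u I_n)`,
so dominated convergence passes to the limit, and it controls every power of `I^{(g)}`.
-/

open MeasureTheory ProbabilityTheory Filter Real Set Topology
open scoped ENNReal

namespace ProbabilityTheory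

lemma ae_nonneg_expMeasure (lam : ℝ) : ∀ᵐ x ∂expMeasure lam, 0 ≤ x := by
  simp only [ae_iff, not_le]
  exact (withDensity_apply _ measurableSet_Iio).trans (lintegral_gammaPDF_of_nonpos le_rfl)

lemma lintegral_exp_neg_mul_expMeasure {lam b : ℝ} (hb : 0 < lam + b) :
    ∫⁻ x, ENNReal.ofReal (exp (-(b * x))) ∂expMeasure lam = ENNReal.ofReal (lam / (lam + b)) := by
  have hdens : ∀ x, exponentialPDF lam x * ENNReal.ofReal (exp (-(b * x))) =
      (Ici 0).indicator
        (fun x => ENNReal.ofReal lam * ENNReal.ofReal (exp (-(lam + b) * x))) x := by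
    intro x
    rcases lt_or_ge x 0 with hx | hx
    · simp [exponentialPDF_of_neg hx, hx]
    · rw [exponentialPDF_of_nonneg hx, indicator_of_mem (mem_Ici.2 hx),
        ← ENNReal.ofReal_mul' (exp_pos _).le, ← ENNReal.ofReal_mul' (exp_pos _).le, mul_assoc,
        ← exp_add]
      ring_nf
  have hexp : ∫ x in Ici (0:ℝ), exp (-(lam + b) * x) = (lam + b)⁻¹ := by
    rw [integral_Ici_eq_integral_Ioi, integral_exp_mul_Ioi (by linarith), mul_zero, exp_zero,
      neg_div, div_neg, neg_neg, one_div]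
  have hint : IntegrableOn (fun x => exp (-(lam + b) * x)) (Ici 0) :=
    (integrableOn_Ici_iff_integrableOn_Ioi).2 (integrableOn_exp_mul_Ioi (by linarith) 0)
  change ∫⁻ x, _ ∂volume.withDensity (exponentialPDF lam) = _
  have hpdf : Measurable (exponentialPDF lam) := (measurable_exponentialPDFReal lam).ennreal_ofReal
  rw [lintegral_withDensity_eq_lintegral_mul₀ hpdf.aemeasurable (by fun_prop)]
  simp only [Pi.mul_apply, hdens]
  rw [lintegral_indicator measurableSet_Ici, lintegral_const_mul _ (by fun_prop),
    ← ofReal_integral_eq_lintegral_ofReal hint (ae_of_all _ fun x => (exp_pos _).le), hexp,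
    ← ENNReal.ofReal_mul' (by positivity), div_eq_mul_inv]

lemma lintegral_exp_neg_sum_mul_of_indepFun {Ω ι : Type*} [MeasurableSpace Ω] [Fintype ι]
    {P : Measure Ω} [IsFiniteMeasure P] {lam : ℝ} (hlam : 0 < lam) {C V : Ω → ι → ℝ}
    (hC : Measurable C) (hV : Measurable V) (hCV : IndepFun C V P)
    (hVlaw : P.map V = Measure.pi fun _ => expMeasure lam) (hC_gt : ∀ ω i, 0 < lam + C ω i) :
    ∫⁻ ω, ENNReal.ofReal (exp (-∑ i, C ω i * V ω i)) ∂P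
      = ∫⁻ ω, ENNReal.ofReal (∏ i, lam / (lam + C ω i)) ∂P := by
  have := isProbabilityMeasure_expMeasure hlam
  set F : (ι → ℝ) × (ι → ℝ) → ℝ≥0∞ := fun p => ENNReal.ofReal (exp (-∑ i, p.1 i * p.2 i))
  have hF : Measurable F := by fun_prop
  have hinner : ∀ c : ι → ℝ, (∀ i, 0 < lam + c i) →
      ∫⁻ v, F (c, v) ∂(Measure.pi fun _ => expMeasure lam)
        = ENNReal.ofReal (∏ i, lam / (lam + c i)) := by
    intro c hc
    have hprod : ∀ v : ι → ℝ, F (c, v) = ∏ i, ENNReal.ofReal (exp (-(c i * v i))) := fun v => by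
      rw [← ENNReal.ofReal_prod_of_nonneg fun i _ => (exp_pos _).le, ← exp_sum,
        Finset.sum_neg_distrib]
    have hX : ∀ i, Measurable fun x : ℝ => ENNReal.ofReal (exp (-(c i * x))) := fun i => by
      fun_prop
    have hsplit := lintegral_prod_eq_prod_lintegral_of_indepFun Finset.univ _
      (iIndepFun_pi (μ := fun _ => expMeasure lam) fun i => (hX i).aemeasurable)
      fun i => (hX i).comp (measurable_pi_apply i)
    simp_rw [hprod]
    rw [hsplit, ENNReal.ofReal_prod_of_nonneg fun i _ => (div_pos hlam (hc i)).le]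
    refine Finset.prod_congr rfl fun i _ => ?_
    rw [← lintegral_exp_neg_mul_expMeasure (hc i)]
    exact (measurePreserving_eval (fun _ => expMeasure lam) i).lintegral_comp (hX i)
  calc ∫⁻ ω, ENNReal.ofReal (exp (-∑ i, C ω i * V ω i)) ∂P
      = ∫⁻ p, F p ∂(P.map fun ω => (C ω, V ω)) := (lintegral_map hF (hC.prodMk hV)).symm
    _ = ∫⁻ p, F p ∂((P.map C).prod (P.map V)) := by
      rw [(indepFun_iff_map_prod_eq_prod_map_map hC.aemeasurable hV.aemeasurable).mp hCV]
    _ = ∫⁻ c, ∫⁻ v, F (c, v) ∂(P.map V) ∂(P.map C) := lintegral_prod _ hF.aemeasurable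
    _ = ∫⁻ ω, ∫⁻ v, F (C ω, v) ∂(P.map V) ∂P := lintegral_map hF.lintegral_prod_right' hC
    _ = ∫⁻ ω, ENNReal.ofReal (∏ i, lam / (lam + C ω i)) ∂P :=
      lintegral_congr fun ω => by rw [hVlaw, hinner _ (hC_gt ω)]

lemma iIndepFun.indepFun_sumElim_finset {Ω ι κ β : Type*} [MeasurableSpace Ω]
    [MeasurableSpace β] {P : Measure Ω} {X : ι → Ω → β} {Y : κ → Ω → β}
    (h : iIndepFun (Sum.elim X Y) P)
    (hX : ∀ i, Measurable (X i)) (hY : ∀ k, Measurable (Y k)) (s : Finset ι) (t : Finset κ) :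
    IndepFun (fun ω (i : s) => X i ω) (fun ω (k : t) => Y k ω) P := by
  have hST : Disjoint (s.map .inl) (t.map .inr) := by simp [Finset.disjoint_left]
  refine (h.indepFun_finset _ _ hST (Sum.forall.2 ⟨hX, hY⟩)).comp
    (φ := fun v (i : s) => v ⟨.inl i, by simp⟩) (ψ := fun v (k : t) => v ⟨.inr k, by simp⟩)
    (measurable_pi_lambda _ fun _ => measurable_pi_apply _)
    (measurable_pi_lambda _ fun _ => measurable_pi_apply _)

lemma iIndepFun.indepFun_comp_partialSum {Ω : Type*} [MeasurableSpace Ω]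
    {P : Measure Ω} {Z E : ℕ → Ω → ℝ} (h : iIndepFun (Sum.elim Z E) P)
    (hZ : ∀ i, Measurable (Z i)) (hE : ∀ k, Measurable (E k)) {f : ℝ → ℝ} (hf : Measurable f)
    (n : ℕ) :
    IndepFun (fun ω (k : Finset.range n) => f (∑ i ∈ Finset.range k, Z i ω))
      (fun ω (k : Finset.range n) => E k ω) P := by
  let Φ : (Finset.range n → ℝ) → Finset.range n → ℝ := fun z k =>
    f (∑ i ∈ Finset.range k, if hi : i ∈ Finset.range n then z ⟨i, hi⟩ else 0)
  have hΦ : Measurable Φ := by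
    refine measurable_pi_lambda _ fun k => hf.comp (Finset.measurable_sum _ fun i _ => ?_)
    split_ifs
    · exact measurable_pi_apply _
    · exact measurable_const
  convert (h.indepFun_sumElim_finset hZ hE (Finset.range n) (Finset.range n)).comp hΦ
    measurable_id using 1
  · funext ω k
    refine congrArg f (Finset.sum_congr rfl fun i hi => ?_)
    rw [dif_pos (Finset.range_subset_range.2 (Finset.mem_range.1 k.2).le hi)]
  · rfl

lemma iIndepFun.map_restrict_eq_pi {Ω ι β : Type*} [MeasurableSpace Ω] [MeasurableSpace β]
    {P : Measure Ω} {X : ι → Ω → β} (h : iIndepFun X P) (hX : ∀ i, Measurable (X i))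
    {ν : Measure β} (hν : ∀ i, P.map (X i) = ν) (s : Finset ι) :
    P.map (fun ω (i : s) => X i ω) = Measure.pi fun _ => ν := by
  have hs : iIndepFun (fun i : s => X i) P := h.precomp Subtype.val_injective
  rw [iIndepFun.map_fun_eq_pi_map (fun i : s => (hX i).aemeasurable) hs]
  simp only [hν]

end ProbabilityTheory

lemma div_sub_le_exp_div {lam x y : ℝ} (hx : 0 ≤ x) (hxy : x ≤ y) (hy : y < lam) :
    lam / (lam - x) ≤ exp (x / (lam - y)) := by
  have hx' : lam - x ≠ 0 := by linarith
  calc lam / (lam - x) = x / (lam - x) + 1 := by field_simp; ring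
    _ ≤ x / (lam - y) + 1 := by gcongr
    _ ≤ exp (x / (lam - y)) := add_one_le_exp _

lemma neg_mul_le_max_mul {u x y : ℝ} (hx : 0 ≤ x) (hxy : x ≤ y) : -(u * x) ≤ max (-u) 0 * y :=
  calc -(u * x) = -u * x := by ring
    _ ≤ max (-u) 0 * x := by gcongr; exact le_max_left _ _
    _ ≤ max (-u) 0 * y := by gcongr

lemma pow_le_factorial_div_mul_exp {x c : ℝ} (hx : 0 ≤ x) (hc : 0 < c) (m : ℕ) :
    x ^ m ≤ m.factorial / c ^ m * exp (c * x) := by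
  have h := pow_div_factorial_le_exp _ (mul_nonneg hc.le hx) m
  rw [div_le_iff₀ (by positivity), mul_pow] at h
  rw [div_mul_eq_mul_div, le_div_iff₀ (by positivity)]
  linarith

lemma summable_comp_nat_div {f : ℕ → ℝ} (hf0 : ∀ n, 0 ≤ f n) (hf : Summable f) (N : ℕ)
    [NeZero N] : Summable fun k => f (k / N) := by
  have hprod : Summable fun p : ℕ × Fin N => f p.1 := by
    refine (summable_prod_of_nonneg fun p => hf0 p.1).2
      ⟨fun _ => (hasSum_fintype _).summable, ?_⟩
    simpa using hf.mul_left (N : ℝ)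
  exact (Nat.divModEquiv N).summable_iff.2 hprod

lemma AntitoneOn.antitone_comp_max_zero {f : ℝ → ℝ} (hf : AntitoneOn f (Ici 0)) :
    Antitone fun x => f (max x 0) := fun _ _ hab =>
  hf (mem_Ici.2 (le_max_right _ _)) (mem_Ici.2 (le_max_right _ _)) (max_le_max hab le_rfl)

lemma AntitoneOn.summable_comp_mul {f : ℝ → ℝ} (hf : AntitoneOn f (Ici 0)) (hf0 : ∀ x, 0 ≤ f x)
    (hsum : Summable fun k : ℕ => f k) {δ : ℝ} (hδ : 0 < δ) :
    Summable fun k : ℕ => f (δ * k) := by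
  obtain ⟨N, hN⟩ := exists_nat_gt δ⁻¹
  have hNpos : (0 : ℝ) < N := (inv_pos.2 hδ).trans hN
  have : NeZero N := ⟨by exact_mod_cast hNpos.ne'⟩
  refine (summable_comp_nat_div (fun n => hf0 n) hsum N).of_nonneg_of_le (fun k => hf0 _)
    fun k => hf (mem_Ici.2 (by positivity)) (mem_Ici.2 (by positivity)) ?_
  calc ((k / N : ℕ) : ℝ) ≤ k / N := Nat.cast_div_le
    _ ≤ δ * k := by
      rw [div_le_iff₀ hNpos]
      nlinarith [(inv_lt_iff_one_lt_mul₀ hδ).1 hN, (Nat.cast_nonneg k : (0 : ℝ) ≤ k)]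

section

variable {Ω : Type*} [MeasurableSpace Ω] {P : Measure Ω}

lemma lintegral_le_of_ae_tendsto {F : ℕ → Ω → ℝ≥0∞} {f : Ω → ℝ≥0∞}
    (hF : ∀ n, AEMeasurable (F n) P) (hlim : ∀ᵐ ω ∂P, Tendsto (F · ω) atTop (𝓝 (f ω)))
    {C : ℝ≥0∞} (hC : ∀ n, ∫⁻ ω, F n ω ∂P ≤ C) :
    ∫⁻ ω, f ω ∂P ≤ C :=
  calc ∫⁻ ω, f ω ∂P = ∫⁻ ω, liminf (F · ω) atTop ∂P :=
        lintegral_congr_ae (hlim.mono fun _ h => h.liminf_eq.symm)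
    _ ≤ liminf (fun n => ∫⁻ ω, F n ω ∂P) atTop := lintegral_liminf_le' hF
    _ ≤ C := liminf_le_of_frequently_le' (Eventually.of_forall hC).frequently

lemma ae_summable_of_lintegral_exp_sum_le {f : ℕ → Ω → ℝ} (hf : ∀ k, Measurable (f k))
    (hf0 : ∀ᵐ ω ∂P, ∀ k, 0 ≤ f k ω) {a C : ℝ} (ha : 0 < a)
    (hC : ∀ n, ∫⁻ ω, ENNReal.ofReal (exp (a * ∑ k ∈ Finset.range n, f k ω)) ∂P
      ≤ ENNReal.ofReal C) :
    ∀ᵐ ω ∂P, Summable fun k => f k ω := by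
  set F : ℕ → Ω → ℝ≥0∞ := fun n ω => ENNReal.ofReal (exp (a * ∑ k ∈ Finset.range n, f k ω))
  have hFmeas : ∀ n, AEMeasurable (F n) P := fun n => by fun_prop
  have hmono : ∀ᵐ ω ∂P, Monotone (F · ω) := by
    filter_upwards [hf0] with ω hω m n hmn
    refine ENNReal.ofReal_le_ofReal (exp_le_exp.2 (mul_le_mul_of_nonneg_left ?_ ha.le))
    exact Finset.sum_le_sum_of_subset_of_nonneg (Finset.range_subset_range.2 hmn)
      fun k _ _ => hω k
  have hsup : ∫⁻ ω, ⨆ n, F n ω ∂P ≠ ⊤ := by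
    rw [lintegral_iSup' hFmeas hmono]
    exact ne_top_of_le_ne_top ENNReal.ofReal_ne_top (iSup_le hC)
  filter_upwards [ae_lt_top' (AEMeasurable.iSup hFmeas) hsup, hf0] with ω hω hω0
  refine summable_of_sum_range_le hω0 (c := (⨆ n, F n ω).toReal / a) fun n => ?_
  have hle : exp (a * ∑ k ∈ Finset.range n, f k ω) ≤ (⨆ n, F n ω).toReal := by
    simpa [F, ENNReal.toReal_ofReal (exp_pos _).le] using
      ENNReal.toReal_mono hω.ne (le_iSup (F · ω) n)
  rw [le_div_iff₀ ha, mul_comm]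
  linarith [add_one_le_exp (a * ∑ k ∈ Finset.range n, f k ω)]

end

/-- In the theorem `G k = g (S k)`, `γ = g 0` and `B = ∑' k, g (δ k)`. -/
structure WeightedExpSeries {Ω : Type*} [MeasurableSpace Ω] (P : Measure Ω) (lam γ B : ℝ)
    (G E : ℕ → Ω → ℝ) : Prop where
  lam_pos : 0 < lam
  measurable_weight : ∀ k, Measurable (G k)
  weight_nonneg : ∀ k ω, 0 ≤ G k ω
  weight_le : ∀ k ω, G k ω ≤ γ
  sum_weight_le : ∀ᵐ ω ∂P, ∀ n, ∑ k ∈ Finset.range n, G k ω ≤ B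
  measurable_exp : ∀ k, Measurable (E k)
  iIndepFun_exp : iIndepFun E P
  map_exp : ∀ k, P.map (E k) = expMeasure lam
  indepFun_weight_exp : ∀ n : ℕ, IndepFun (fun ω (k : Finset.range n) => G k ω)
    (fun ω (k : Finset.range n) => E k ω) P

namespace WeightedExpSeries

variable {Ω : Type*} [MeasurableSpace Ω] {P : Measure Ω} {lam γ B : ℝ} {G E : ℕ → Ω → ℝ}

lemma lam_add_weight_mul_pos (h : WeightedExpSeries P lam γ B G E) {u : ℝ}
    (hu : 0 < lam + γ * u) (k : ℕ) (ω : Ω) : 0 < lam + G k ω * u := by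
  have := h.weight_nonneg k ω
  have := h.weight_le k ω
  have := h.lam_pos
  rcases le_or_gt 0 u with hu0 | hu0 <;> nlinarith

lemma max_neg_mul_lt (h : WeightedExpSeries P lam γ B G E) {u : ℝ} (hu : 0 < lam + γ * u) :
    max (-u) 0 * γ < lam := by
  have := h.lam_pos
  rcases le_total (-u) 0 with hu0 | hu0
  · rw [max_eq_right hu0]; linarith
  · rw [max_eq_left hu0]; linarith

lemma measurable_sum (h : WeightedExpSeries P lam γ B G E) (n : ℕ) :
    Measurable fun ω => ∑ k ∈ Finset.range n, G k ω * E k ω :=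
  Finset.measurable_sum _ fun k _ => (h.measurable_weight k).mul (h.measurable_exp k)

lemma ae_mul_nonneg (h : WeightedExpSeries P lam γ B G E) :
    ∀ᵐ ω ∂P, ∀ k, 0 ≤ G k ω * E k ω := by
  refine ae_all_iff.2 fun k => ?_
  have hE := (ae_map_iff (h.measurable_exp k).aemeasurable measurableSet_Ici).1
    (h.map_exp k ▸ ae_nonneg_expMeasure lam)
  exact hE.mono fun ω hω => mul_nonneg (h.weight_nonneg k ω) hω

lemma lintegral_exp_neg_mul_sum [IsFiniteMeasure P] (h : WeightedExpSeries P lam γ B G E) {u : ℝ}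
    (hu : 0 < lam + γ * u) (n : ℕ) :
    ∫⁻ ω, ENNReal.ofReal (exp (-(u * ∑ k ∈ Finset.range n, G k ω * E k ω))) ∂P
      = ∫⁻ ω, ENNReal.ofReal (∏ k ∈ Finset.range n, lam / (lam + G k ω * u)) ∂P := by
  have hV := h.iIndepFun_exp.map_restrict_eq_pi h.measurable_exp h.map_exp (Finset.range n)
  have hCV := (h.indepFun_weight_exp n).comp (φ := fun c (k : Finset.range n) => c k * u)
    (ψ := id) (by fun_prop) measurable_id
  have key := lintegral_exp_neg_sum_mul_of_indepFun h.lam_pos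
    (C := fun ω (k : Finset.range n) => G k ω * u) (V := fun ω (k : Finset.range n) => E k ω)
    (measurable_pi_lambda _ fun k => (h.measurable_weight k).mul_const u)
    (measurable_pi_lambda _ fun k => h.measurable_exp k) hCV hV
    fun ω k => h.lam_add_weight_mul_pos hu k ω
  convert key using 4 with ω
  · rw [Finset.mul_sum, ← Finset.sum_coe_sort]
    congr 2
    exact Finset.sum_congr rfl fun k _ => by ring
  · exact (Finset.prod_coe_sort _ _).symm

lemma lintegral_exp_mul_sum_le [IsProbabilityMeasure P] (h : WeightedExpSeries P lam γ B G E)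
    {a : ℝ} (ha : 0 ≤ a) (haγ : a * γ < lam) (n : ℕ) :
    ∫⁻ ω, ENNReal.ofReal (exp (a * ∑ k ∈ Finset.range n, G k ω * E k ω)) ∂P
      ≤ ENNReal.ofReal (exp (a * B / (lam - a * γ))) := by
  have hu : 0 < lam + γ * -a := by linarith
  have hprod : ∀ᵐ ω ∂P,
      ∏ k ∈ Finset.range n, lam / (lam + G k ω * -a) ≤ exp (a * B / (lam - a * γ)) := by
    filter_upwards [h.sum_weight_le] with ω hω
    calc ∏ k ∈ Finset.range n, lam / (lam + G k ω * -a)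
        ≤ ∏ k ∈ Finset.range n, exp (a * G k ω / (lam - a * γ)) := by
          refine Finset.prod_le_prod
            (fun k _ => (div_pos h.lam_pos (h.lam_add_weight_mul_pos hu k ω)).le) fun k _ => ?_
          rw [mul_neg, ← sub_eq_add_neg, mul_comm]
          exact div_sub_le_exp_div (mul_nonneg ha (h.weight_nonneg k ω))
            (mul_le_mul_of_nonneg_left (h.weight_le k ω) ha) haγ
      _ = exp ((a * ∑ k ∈ Finset.range n, G k ω) / (lam - a * γ)) := by
          rw [← exp_sum, ← Finset.sum_div, ← Finset.mul_sum]
      _ ≤ exp (a * B / (lam - a * γ)) := exp_le_exp.2 <|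
          div_le_div_of_nonneg_right (mul_le_mul_of_nonneg_left (hω n) ha) (by linarith)
  calc ∫⁻ ω, ENNReal.ofReal (exp (a * ∑ k ∈ Finset.range n, G k ω * E k ω)) ∂P
      = ∫⁻ ω, ENNReal.ofReal (∏ k ∈ Finset.range n, lam / (lam + G k ω * -a)) ∂P := by
        rw [← h.lintegral_exp_neg_mul_sum hu n]
        simp only [neg_mul, neg_neg]
    _ ≤ ∫⁻ _, ENNReal.ofReal (exp (a * B / (lam - a * γ))) ∂P :=
        lintegral_mono_ae (hprod.mono fun _ hω => ENNReal.ofReal_le_ofReal hω)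
    _ = ENNReal.ofReal (exp (a * B / (lam - a * γ))) := by simp

lemma ae_summable [IsProbabilityMeasure P] (h : WeightedExpSeries P lam γ B G E) :
    ∀ᵐ ω ∂P, Summable fun k => G k ω * E k ω := by
  obtain ⟨a, ha, haγ⟩ := exists_pos_mul_lt h.lam_pos γ
  exact ae_summable_of_lintegral_exp_sum_le
    (fun k => (h.measurable_weight k).mul (h.measurable_exp k)) h.ae_mul_nonneg ha
    (h.lintegral_exp_mul_sum_le ha.le (by linarith [mul_comm a γ]))

lemma ae_tendsto_sum [IsProbabilityMeasure P] (h : WeightedExpSeries P lam γ B G E) :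
    ∀ᵐ ω ∂P, Tendsto (fun n => ∑ k ∈ Finset.range n, G k ω * E k ω) atTop
      (𝓝 (∑' k, G k ω * E k ω)) :=
  h.ae_summable.mono fun _ hω => hω.hasSum.tendsto_sum_nat

lemma aemeasurable_tsum [IsProbabilityMeasure P] (h : WeightedExpSeries P lam γ B G E) :
    AEMeasurable (fun ω => ∑' k, G k ω * E k ω) P :=
  aemeasurable_of_tendsto_metrizable_ae' (fun n => (h.measurable_sum n).aemeasurable)
    h.ae_tendsto_sum

lemma integrable_exp_mul_tsum [IsProbabilityMeasure P] (h : WeightedExpSeries P lam γ B G E)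
    {a : ℝ} (ha : 0 ≤ a) (haγ : a * γ < lam) :
    Integrable (fun ω => exp (a * ∑' k, G k ω * E k ω)) P := by
  refine ⟨(Real.measurable_exp.comp_aemeasurable
    (h.aemeasurable_tsum.const_mul a)).aestronglyMeasurable, ?_⟩
  rw [hasFiniteIntegral_iff_ofReal (ae_of_all _ fun _ => (exp_pos _).le)]
  refine (lintegral_le_of_ae_tendsto
    (fun n => ((h.measurable_sum n).const_mul a).exp.ennreal_ofReal.aemeasurable) ?_
    (h.lintegral_exp_mul_sum_le ha haγ)).trans_lt ENNReal.ofReal_lt_top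
  filter_upwards [h.ae_tendsto_sum] with ω hω
  exact (ENNReal.continuous_ofReal.tendsto _).comp
    ((continuous_exp.tendsto _).comp (hω.const_mul a))

lemma integrable_exp_neg_mul_tsum [IsProbabilityMeasure P] (h : WeightedExpSeries P lam γ B G E)
    {u : ℝ} (hu : 0 < lam + γ * u) :
    Integrable (fun ω => exp (-(u * ∑' k, G k ω * E k ω))) P := by
  refine (h.integrable_exp_mul_tsum (le_max_right _ _) (h.max_neg_mul_lt hu)).mono'
    (Real.measurable_exp.comp_aemeasurable
      (h.aemeasurable_tsum.const_mul u).neg).aestronglyMeasurable ?_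
  filter_upwards [h.ae_mul_nonneg] with ω hω
  rw [norm_of_nonneg (exp_pos _).le]
  exact exp_le_exp.2 (neg_mul_le_max_mul (tsum_nonneg hω) le_rfl)

lemma integral_prod_div_eq [IsFiniteMeasure P] (h : WeightedExpSeries P lam γ B G E) {u : ℝ}
    (hu : 0 < lam + γ * u) (n : ℕ) :
    ∫ ω, ∏ k ∈ Finset.range n, lam / (lam + G k ω * u) ∂P
      = ∫ ω, exp (-(u * ∑ k ∈ Finset.range n, G k ω * E k ω)) ∂P := by
  have := h.measurable_weight
  have := h.measurable_exp
  rw [integral_eq_lintegral_of_nonneg_ae, integral_eq_lintegral_of_nonneg_ae,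
    h.lintegral_exp_neg_mul_sum hu n]
  · exact ae_of_all _ fun _ => (exp_pos _).le
  · fun_prop
  · exact ae_of_all _ fun ω =>
      Finset.prod_nonneg fun k _ => (div_pos h.lam_pos (h.lam_add_weight_mul_pos hu k ω)).le
  · exact (Finset.measurable_prod _ fun k _ => by fun_prop).aestronglyMeasurable

lemma tendsto_integral_prod_div [IsProbabilityMeasure P] (h : WeightedExpSeries P lam γ B G E)
    {u : ℝ} (hu : 0 < lam + γ * u) :
    Tendsto (fun n => ∫ ω, ∏ k ∈ Finset.range n, lam / (lam + G k ω * u) ∂P) atTop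
      (𝓝 (∫ ω, exp (-(u * ∑' k, G k ω * E k ω)) ∂P)) := by
  simp only [h.integral_prod_div_eq hu]
  refine tendsto_integral_of_dominated_convergence _
    (fun n =>
      (Real.measurable_exp.comp ((h.measurable_sum n).const_mul u).neg).aestronglyMeasurable)
    (h.integrable_exp_mul_tsum (le_max_right _ _) (h.max_neg_mul_lt hu)) (fun n => ?_) ?_
  · filter_upwards [h.ae_mul_nonneg, h.ae_summable] with ω hω hsum
    rw [norm_of_nonneg (exp_pos _).le]
    exact exp_le_exp.2 (neg_mul_le_max_mul (Finset.sum_nonneg fun k _ => hω k)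
      (hsum.sum_le_tsum _ fun k _ => hω k))
  · filter_upwards [h.ae_tendsto_sum] with ω hω
    exact (continuous_exp.tendsto _).comp (hω.const_mul u).neg

lemma integrable_tsum_pow [IsProbabilityMeasure P] (h : WeightedExpSeries P lam γ B G E)
    (m : ℕ) :
    Integrable (fun ω => (∑' k, G k ω * E k ω) ^ m) P := by
  obtain ⟨a, ha, haγ⟩ := exists_pos_mul_lt h.lam_pos γ
  refine ((h.integrable_exp_mul_tsum ha.le (by linarith [mul_comm a γ])).const_mul
    (m.factorial / a ^ m)).mono' (h.aemeasurable_tsum.pow_const m).aestronglyMeasurable ?_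
  filter_upwards [h.ae_mul_nonneg] with ω hω
  rw [norm_of_nonneg (pow_nonneg (tsum_nonneg hω) m)]
  exact pow_le_factorial_div_mul_exp (tsum_nonneg hω) ha m

lemma of_randomWalk (hlam : 0 < lam) {g : ℝ → ℝ} (hgnn : ∀ x, 0 ≤ g x)
    (hganti : AntitoneOn g (Ici 0)) {delta : ℝ} (hdelta : 0 ≤ delta) {Z : ℕ → Ω → ℝ}
    (hZmeas : ∀ i, Measurable (Z i)) (hEmeas : ∀ k, Measurable (E k)) (hZnn : ∀ i ω, 0 ≤ Z i ω)
    (hZdelta : ∀ i, ∀ᵐ ω ∂P, delta < Z i ω) (hgsum : Summable fun k : ℕ => g (delta * k))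
    (hEexp : ∀ k, P.map (E k) = expMeasure lam) (hIndep : iIndepFun (Sum.elim Z E) P) :
    WeightedExpSeries P lam (g 0) (∑' k : ℕ, g (delta * k))
      (fun k ω => g (∑ i ∈ Finset.range k, Z i ω)) E := by
  have hS0 : ∀ k ω, 0 ≤ ∑ i ∈ Finset.range k, Z i ω := fun k ω =>
    Finset.sum_nonneg fun i _ => hZnn i ω
  -- `g` is only antitone on `[0, ∞)`; `g (max · 0)` is a globally measurable version of it
  have hgS : ∀ k ω, g (∑ i ∈ Finset.range k, Z i ω) = g (max (∑ i ∈ Finset.range k, Z i ω) 0) :=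
    fun k ω => by rw [max_eq_left (hS0 k ω)]
  have hgm := hganti.antitone_comp_max_zero
  have hE : iIndepFun (fun k => Sum.elim Z E (.inr k)) P := hIndep.precomp Sum.inr_injective
  refine ⟨hlam, ?_, fun k ω => hgnn _,
    fun k ω => hganti (mem_Ici.2 le_rfl) (mem_Ici.2 (hS0 k ω)) (hS0 k ω), ?_, hEmeas, hE, hEexp,
    fun n => ?_⟩
  · simp only [hgS]
    exact fun k => hgm.measurable.comp (Finset.measurable_sum _ fun i _ => hZmeas i)
  · filter_upwards [ae_all_iff.2 hZdelta] with ω hω n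
    refine (Finset.sum_le_sum fun k _ => hganti (mem_Ici.2 ?_) (mem_Ici.2 (hS0 k ω)) ?_).trans
      (hgsum.sum_le_tsum _ fun k _ => hgnn _)
    · positivity
    · calc delta * k = ∑ _i ∈ Finset.range k, delta := by simp [mul_comm]
        _ ≤ ∑ i ∈ Finset.range k, Z i ω := Finset.sum_le_sum fun i _ => (hω i).le
  · simp only [hgS]
    exact hIndep.indepFun_comp_partialSum hZmeas hEmeas hgm.measurable n

end WeightedExpSeries

theorem stmt6_general
    {Ω : Type*} [MeasurableSpace Ω] (P : Measure Ω) [IsProbabilityMeasure P]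
    (lam : ℝ) (hlam : 0 < lam)
    (g : ℝ → ℝ) (hgnn : ∀ x, 0 ≤ g x) (hganti : StrictAntiOn g (Set.Ici 0))
    (hgsum : Summable fun k : ℕ => g ((k : ℝ) + 1))
    (delta : ℝ) (hdelta : 0 < delta)
    (Z : ℕ → Ω → ℝ) (E : ℕ → Ω → ℝ)
    (hZmeas : ∀ i, Measurable (Z i))
    (hEmeas : ∀ k, Measurable (E k))
    (hZnn : ∀ i, ∀ ω, 0 ≤ Z i ω)
    (hZdelta : ∀ i, ∀ᵐ ω ∂P, delta < Z i ω)
    (hEexp : ∀ k, Measure.map (E k) P = expMeasure lam)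
    (hIndep : iIndepFun (Sum.elim Z E) P)
    (S : ℕ → Ω → ℝ) (hS : ∀ k ω, S k ω = ∑ i ∈ Finset.range k, Z i ω)
    (Ig : Ω → ℝ) (hIg : ∀ ω, Ig ω = ∑' k : ℕ, g (S k ω) * E k ω) :
    (∀ᵐ ω ∂P, Summable fun k : ℕ => g (S k ω) * E k ω) ∧
    (∀ u : ℝ, -lam / g 0 < u →
      Integrable (fun ω => Real.exp (-(u * Ig ω))) P ∧
      Tendsto (fun K : ℕ => ∫ ω, ∏ k ∈ Finset.range (K + 1), lam / (lam + g (S k ω) * u) ∂P)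
        atTop (nhds (∫ ω, Real.exp (-(u * Ig ω)) ∂P))) ∧
    ∀ m : ℕ, Integrable (fun ω => Ig ω ^ m) P := by
  have hg0 : 0 < g 0 :=
    (hgnn 1).trans_lt (hganti (mem_Ici.2 le_rfl) (mem_Ici.2 zero_le_one) zero_lt_one)
  have hgnat : Summable fun k : ℕ => g k := (summable_nat_add_iff 1).1 (by simpa using hgsum)
  obtain rfl : S = fun k ω => ∑ i ∈ Finset.range k, Z i ω := funext fun k => funext (hS k)
  obtain rfl := funext hIg
  have h := WeightedExpSeries.of_randomWalk hlam hgnn hganti.antitoneOn hdelta.le hZmeas hEmeas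
    hZnn hZdelta (hganti.antitoneOn.summable_comp_mul hgnn hgnat hdelta) hEexp hIndep
  have hu : ∀ u, -lam / g 0 < u → 0 < lam + g 0 * u := fun u hu => by
    rw [div_lt_iff₀ hg0] at hu
    linarith
  exact ⟨h.ae_summable, fun u hu' => ⟨h.integrable_exp_neg_mul_tsum (hu u hu'),
    (h.tendsto_integral_prod_div (hu u hu')).comp (tendsto_add_atTop_nat 1)⟩,
    h.integrable_tsum_pow⟩

/-- for a bounded strictly decreasing `g : [0,∞) → [0,∞)` with
`∑_{k≥1} g(k) < ∞` and jumps bounded away from `0`, the random variable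
`I^{(g)} = ∑ₖ g(S_k) E_{k+1}` is a.s. finite, for every real `u > -λ/g(0)` its Laplace
transform is finite and equals `lim_K E[∏_{k=0}^K λ/(λ + g(S_k) u)]`; in particular
`I^{(g)}` has finite moments of all orders. -/
theorem stmt6
    {Ω : Type*} [MeasurableSpace Ω] (P : Measure Ω) [IsProbabilityMeasure P]
    (lam : ℝ) (hlam : 0 < lam)
    (g : ℝ → ℝ) (hgnn : ∀ x, 0 ≤ g x) (hganti : StrictAntiOn g (Set.Ici 0))
    (hgbdd : BddAbove (g '' Set.Ici 0))
    (hgsum : Summable fun k : ℕ => g ((k : ℝ) + 1))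
    (delta : ℝ) (hdelta : 0 < delta)
    (Z : ℕ → Ω → ℝ) (E : ℕ → Ω → ℝ)
    (hZmeas : ∀ i, Measurable (Z i))
    (hEmeas : ∀ k, Measurable (E k))
    (hZnn : ∀ i, ∀ ω, 0 ≤ Z i ω)
    (hZdelta : ∀ i, ∀ᵐ ω ∂P, delta < Z i ω)
    (hZid : ∀ i, Measure.map (Z i) P = Measure.map (Z 0) P)
    (hEexp : ∀ k, Measure.map (E k) P = expMeasure lam)
    (hIndep : iIndepFun (Sum.elim Z E) P)
    (S : ℕ → Ω → ℝ) (hS : ∀ k ω, S k ω = ∑ i ∈ Finset.range k, Z i ω)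
    (Ig : Ω → ℝ) (hIg : ∀ ω, Ig ω = ∑' k : ℕ, g (S k ω) * E k ω) :
    (∀ᵐ ω ∂P, Summable fun k : ℕ => g (S k ω) * E k ω) ∧
    (∀ u : ℝ, -lam / g 0 < u →
      Integrable (fun ω => Real.exp (-(u * Ig ω))) P ∧
      Tendsto (fun K : ℕ => ∫ ω, ∏ k ∈ Finset.range (K + 1), lam / (lam + g (S k ω) * u) ∂P)
        atTop (nhds (∫ ω, Real.exp (-(u * Ig ω)) ∂P))) ∧
    ∀ m : ℕ, Integrable (fun ω => Ig ω ^ m) P :=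
  stmt6_general P lam hlam g hgnn hganti hgsum delta hdelta Z E hZmeas hEmeas hZnn hZdelta hEexp
    hIndep S hS Ig hIg
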